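/- For every σ ∈ S_a^+ (i.e., σ_i + 1 > 0 for all i) with σ_{n-1} = 0 and every x ∈ ℝ^n, one has P^d(σ) ≤ P(x), where P is the Rosenbrock function and P^d the canonical dual function (weak duality on S_a^+). -/
import Mathlib

noncomputable def rosenbrock (m : ℕ) (α : ℝ) (x : Fin (m+1) → ℝ) : ℝ :=
  ∑ i : Fin m, ((x i.castSucc - 1)^2 + α/2 * (x i.succ - (x i.castSucc)^2)^2)

noncomputable def spre (m : ℕ) (σ : Fin m → ℝ) (i : Fin m) : ℝ :=
  if h : 0 < (i : ℕ) then σ ⟨(i : ℕ) - 1, by have := i.isLt; omega⟩ else 0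

noncomputable def Pd (m : ℕ) (α : ℝ) (σ : Fin m → ℝ) : ℝ :=
  (m : ℝ) - ∑ i : Fin m, ((spre m σ i + 2)^2 / (4 * (σ i + 1)) + (σ i)^2 / (2*α))

theorem weak_duality (m : ℕ) (hm : 1 ≤ m) (α : ℝ) (hα : 0 < α)
    (σ : Fin m → ℝ) (hσ : ∀ i : Fin m, σ i + 1 > 0)
    (hlast : σ ⟨m - 1, by omega⟩ = 0)
    (x : Fin (m+1) → ℝ) :
    Pd m α σ ≤ rosenbrock m α x := by
  set A : Fin m → ℝ := fun i =>
    (α*(x i.succ - (x i.castSucc)^2) + σ i)^2 / (2*α) with hA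
  set B : Fin m → ℝ := fun i =>
    (2*(σ i + 1)*(x i.castSucc) - (spre m σ i + 2))^2 / (4*(σ i + 1)) with hB
  set c : Fin m → ℝ := fun i =>
    spre m σ i * x i.castSucc - σ i * x i.succ with hc
  have hshift : ∑ i : Fin m, c i = 0 := by
    have key : ∑ i : Fin m, σ i * x i.succ
        = ∑ i : Fin m, spre m σ i * x i.castSucc := by
      set F : Fin (m+1) → ℝ := fun j =>
        (if h : 0 < (j:ℕ) then σ ⟨(j:ℕ)-1, by have := j.isLt; omega⟩ else 0) * x j with hF
      have h1 : ∀ i : Fin m, F i.succ = σ i * x i.succ := by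
        intro i
        simp only [hF, Fin.val_succ]
        rw [dif_pos (Nat.succ_pos _)]
        congr 2
      have h2 : ∀ i : Fin m, F i.castSucc = spre m σ i * x i.castSucc := by
        intro i
        simp only [hF, spre, Fin.coe_castSucc]
      have h0 : F 0 = 0 := by simp [hF]
      have hl : F (Fin.last m) = 0 := by
        simp only [hF, Fin.val_last]
        rw [dif_pos (by omega : 0 < m)]
        rw [show σ ⟨m-1, by omega⟩ = 0 from hlast]
        ring
      calc ∑ i : Fin m, σ i * x i.succ = ∑ i : Fin m, F i.succ := by
            exact Finset.sum_congr rfl fun i _ => (h1 i).symm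
        _ = ∑ j : Fin (m+1), F j := by rw [Fin.sum_univ_succ, h0]; ring
        _ = ∑ i : Fin m, F i.castSucc := by rw [Fin.sum_univ_castSucc, hl]; ring
        _ = _ := Finset.sum_congr rfl fun i _ => h2 i
    simp only [hc]
    rw [Finset.sum_sub_distrib, ← key, sub_self]
  have hterm : ∀ i : Fin m,
      ((x i.castSucc - 1)^2 + α/2 * (x i.succ - (x i.castSucc)^2)^2)
        - (1 - ((spre m σ i + 2)^2 / (4 * (σ i + 1)) + (σ i)^2 / (2*α)))
      = A i + B i + c i := by
    intro i
    have h1 : σ i + 1 ≠ 0 := by have := hσ i; linarith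
    have h2 : α ≠ 0 := ne_of_gt hα
    simp only [hA, hB, hc]
    field_simp
    ring
  have hdiff : rosenbrock m α x - Pd m α σ = ∑ i : Fin m, (A i + B i + c i) := by
    rw [← Finset.sum_congr rfl fun i _ => hterm i]
    rw [Finset.sum_sub_distrib, Finset.sum_sub_distrib, Finset.sum_const,
      Finset.card_univ, Fintype.card_fin, nsmul_eq_mul, mul_one]
    rw [rosenbrock, Pd]
  have hnn : 0 ≤ rosenbrock m α x - Pd m α σ := by
    rw [hdiff, Finset.sum_add_distrib, Finset.sum_add_distrib, hshift, add_zero]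
    refine add_nonneg (Finset.sum_nonneg fun i _ => ?_) (Finset.sum_nonneg fun i _ => ?_)
    · exact div_nonneg (sq_nonneg _) (by linarith)
    · exact div_nonneg (sq_nonneg _) (by have := hσ i; linarith)
  linarith
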